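/- arXiv:1602.04472 — 2 statements merged into one kernel-verified Lean document; each statement's English description precedes it below -/
import Mathlib

section
/- Let n ≥ 1 and let p₁,…,p_n ∈ ℂ[[t]]; set p₀ := 1. Define Lu := u^{(n)} + p₁·u^{(n−1)} + … + p_n·u and its adjoint L*v := Σ_{m=0}^{n} (−1)^m·(p_{n−m}·v)^{(m)}. Let S := ker L ⊂ ℂ[[t]] and S* := ker L* ⊂ ℂ[[t]] be the solution spaces, and define the bilinear form β : S × S* → ℂ by β(u,v) := Σ_{m=1}^{n} Σ_{k=0}^{m−1} (−1)^k · u^{(m−1−k)}(0) · (p_{n−m}·v)^{(k)}(0) (the value at 0 of the bilinear concomitant B(u,v) satisfying (Lu)v − u(L*v) = B(u,v)′). Then β is non-degenerate: if u ∈ S satisfies β(u,v) = 0 for all v ∈ S*, then u = 0, and if v ∈ S* satisfies β(u,v) = 0 for all u ∈ S, then v = 0. -/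
open PowerSeries

noncomputable section

/-- The `i`-th divided derivative `(1/i!)·f⁽ⁱ⁾` of a formal power series. -/
def dDeriv (i : ℕ) (f : ℂ⟦X⟧) : ℂ⟦X⟧ :=
  (Nat.factorial i : ℂ)⁻¹ • (⇑(PowerSeries.derivative ℂ))^[i] f

/-- The wronskian of a parametrised arc in `ℂ^N`. -/
def wrons {N : ℕ} (a : Fin N → ℂ⟦X⟧) : ℂ⟦X⟧ :=
  Matrix.det (Matrix.of fun i j : Fin N => dDeriv (j : ℕ) (a i))

/-- A parametrised arc is non-inflexional if its wronskian is a unit of `ℂ⟦t⟧`. -/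
def NonInflexional {N : ℕ} (a : Fin N → ℂ⟦X⟧) : Prop :=
  PowerSeries.constantCoeff (R := ℂ) (wrons a) ≠ 0

/-- Composition `g ∘ φ` of formal power series (meaningful when `φ(0) = 0`). -/
def pscomp (φ g : ℂ⟦X⟧) : ℂ⟦X⟧ :=
  PowerSeries.mk fun m =>
    PowerSeries.coeff (R := ℂ) m
      (∑ k ∈ Finset.range (m + 1), PowerSeries.C (R := ℂ) (PowerSeries.coeff (R := ℂ) k g) * φ ^ k)

/-- `c` is a normalization of the arc `a`: `c(t) = u(t)·(g·a)(φ(t))` with `g ∈ GL_N(ℂ)`,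
`u` a unit of `ℂ⟦t⟧`, `φ(0) = 0`, `φ′(0) ≠ 0`. -/
def IsNormalization {N : ℕ} (a c : Fin N → ℂ⟦X⟧) : Prop :=
  ∃ (g : Matrix (Fin N) (Fin N) ℂ) (u φ : ℂ⟦X⟧),
    IsUnit g.det ∧ IsUnit u ∧ PowerSeries.constantCoeff (R := ℂ) φ = 0 ∧
    PowerSeries.coeff (R := ℂ) 1 φ ≠ 0 ∧
    ∀ i, c i = u * pscomp φ (∑ j, g i j • a j)

/-- `f ≡ g (mod t^m)`. -/
def ModEq (f g : ℂ⟦X⟧) (m : ℕ) : Prop := ∀ j < m, PowerSeries.coeff (R := ℂ) j (f - g) = 0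

/-- The determinant `det(a_{e 0}, a_{e 1}, …, a_{e n})` of coefficient vectors of the arc `a`. -/
def Umin {n : ℕ} (e : Fin (n + 1) → ℕ) (a : Fin (n + 1) → ℂ⟦X⟧) : ℂ :=
  Matrix.det (Matrix.of fun i j => PowerSeries.coeff (R := ℂ) (e j) (a i))

/-- `U = U_{(0)}`. -/
def U0 {n : ℕ} (a : Fin (n + 1) → ℂ⟦X⟧) : ℂ := Umin (fun j => (j : ℕ)) a
/-- `U₁ = U_{(1)}`. -/
def U1 {n : ℕ} (a : Fin (n + 1) → ℂ⟦X⟧) : ℂ :=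
  Umin (fun j => if (j : ℕ) = n then n + 1 else (j : ℕ)) a
/-- `U₂ = U_{(2)}`. -/
def U2 {n : ℕ} (a : Fin (n + 1) → ℂ⟦X⟧) : ℂ :=
  Umin (fun j => if (j : ℕ) = n then n + 2 else (j : ℕ)) a
/-- `U₃ = U_{(3)}`. -/
def U3 {n : ℕ} (a : Fin (n + 1) → ℂ⟦X⟧) : ℂ :=
  Umin (fun j => if (j : ℕ) = n then n + 3 else (j : ℕ)) a
/-- `U₁₁ = U_{(1,1)}`. -/
def U11 {n : ℕ} (a : Fin (n + 1) → ℂ⟦X⟧) : ℂ :=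
  Umin (fun j => if n - 1 ≤ (j : ℕ) then (j : ℕ) + 1 else (j : ℕ)) a
/-- `U₂₁ = U_{(2,1)}`. -/
def U21 {n : ℕ} (a : Fin (n + 1) → ℂ⟦X⟧) : ℂ :=
  Umin (fun j => if (j : ℕ) = n then n + 2 else if (j : ℕ) = n - 1 then n else (j : ℕ)) a
/-- `U₁₁₁ = U_{(1,1,1)}`. -/
def U111 {n : ℕ} (a : Fin (n + 1) → ℂ⟦X⟧) : ℂ :=
  Umin (fun j => if n - 2 ≤ (j : ℕ) then (j : ℕ) + 1 else (j : ℕ)) a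

/-- The Monge expression `U²(U₃+2U₂₁−2U₁₁₁) − 3UU₁(U₁₁+U₂) + 2U₁³` of an arc. -/
def MongeExpr {n : ℕ} (a : Fin (n + 1) → ℂ⟦X⟧) : ℂ :=
  U0 a ^ 2 * (U3 a + 2 * U21 a - 2 * U111 a) - 3 * U0 a * U1 a * (U11 a + U2 a) + 2 * U1 a ^ 3

end

/-! In degree `N`, both `L u` and `L* v` are a nonzero multiple of the coefficient in degree
`N + n` plus terms in lower coefficients, so a solution is determined by its first `n`
coefficients and these can be prescribed freely. In `β(u, v)` the coefficients `u_i` and `v_l`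
only meet when `i + l ≤ n - 1`, and on `i + l = n - 1` only through the term
`(-1)^l i! l! u_i v_l`. So if `u ≠ 0` is a solution of order `j` (necessarily `j < n`) and `v`
a solution of order `n - 1 - j`, then `β(u, v) = ± j! (n - 1 - j)! u_j v_{n-1-j} ≠ 0`;
symmetrically for `v`. -/

namespace PowerSeries

section Truncation

variable {R : Type*} [CommSemiring R]

theorem trunc_eq_trunc_of_le {f g : R⟦X⟧} {m k : ℕ} (h : trunc k f = trunc k g) (hmk : m ≤ k) :
    trunc m f = trunc m g := by
  rw [← trunc_trunc_of_le f hmk, h, trunc_trunc_of_le g hmk]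

theorem coeff_eq_of_trunc_eq {f g : R⟦X⟧} {N M : ℕ} (h : trunc M f = trunc M g) (hN : N < M) :
    coeff N f = coeff N g := by
  rw [← coeff_coe_trunc_of_lt hN, h, coeff_coe_trunc_of_lt hN]

theorem trunc_eq_trunc_of_coeff_eq {f g : R⟦X⟧} {M : ℕ} (h : ∀ i < M, coeff i f = coeff i g) :
    trunc M f = trunc M g := by
  ext i
  simp only [coeff_trunc]
  split_ifs with hi
  exacts [h i hi, rfl]

theorem trunc_mul_eq_trunc_mul {f g : R⟦X⟧} {N : ℕ} (h : trunc N f = trunc N g) (a : R⟦X⟧) :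
    trunc N (a * f) = trunc N (a * g) := by
  rw [← trunc_mul_trunc, h, trunc_mul_trunc]

theorem trunc_iterate_derivative_eq {f g : R⟦X⟧} {N j : ℕ} (h : trunc (N + j) f = trunc (N + j) g) :
    trunc N ((d⁄dX R)^[j] f) = trunc N ((d⁄dX R)^[j] g) := by
  induction j generalizing f g with
  | zero => simpa using h
  | succ j ih =>
    refine ih ?_
    rw [trunc_derivative, trunc_derivative]
    exact congrArg _ h

end Truncation

section Triangular

variable {K : Type*} [Field K]

/-- `coeff N (T f)` determines the coefficient of `f` in degree `N + n` from those below it, as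
for a linear differential operator of order `n` with leading coefficient `1`. -/
def IsTriangular (n : ℕ) (T : K⟦X⟧ → K⟦X⟧) : Prop :=
  ∃ c : ℕ → K, (∀ N, c N ≠ 0) ∧ ∀ N (f g : K⟦X⟧), trunc (N + n) f = trunc (N + n) g →
    coeff N (T f) - c N * coeff (N + n) f = coeff N (T g) - c N * coeff (N + n) g

/-- Feeding `T` the truncation below `M` isolates the part of `coeff (M - n) (T f)` that does not
involve the coefficient of `f` in degree `M`. -/
noncomputable def triangularSolution (n : ℕ) (T : K⟦X⟧ → K⟦X⟧) (c : ℕ → K) (init : ℕ → K) : ℕ → K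
  | M =>
    if M < n then init M
    else -(c (M - n))⁻¹ *
      coeff (M - n) (T (mk fun i => if i < M then triangularSolution n T c init i else 0))
decreasing_by assumption

variable {n : ℕ} {T : K⟦X⟧ → K⟦X⟧}

theorem triangularSolution_of_lt {c init : ℕ → K} {M : ℕ} (h : M < n) :
    triangularSolution n T c init M = init M := by
  rw [triangularSolution, if_pos h]

theorem triangularSolution_add (c init : ℕ → K) (N : ℕ) :
    triangularSolution n T c init (N + n) = -(c N)⁻¹ *
      coeff N (T (mk fun i => if i < N + n then triangularSolution n T c init i else 0)) := by
  rw [triangularSolution, if_neg (by omega), Nat.add_sub_cancel]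

namespace IsTriangular

theorem eq_of_coeff_eq (hT : IsTriangular n T) {f g : K⟦X⟧} (hfg : T f = T g)
    (hinit : ∀ i < n, coeff i f = coeff i g) : f = g := by
  obtain ⟨c, hc, hrec⟩ := hT
  ext M
  induction M using Nat.strong_induction_on with
  | _ M ih =>
    obtain hM | ⟨N, rfl⟩ : M < n ∨ ∃ N, M = N + n := by
      rcases lt_or_ge M n with hM | hM
      exacts [.inl hM, .inr ⟨M - n, by omega⟩]
    · exact hinit M hM
    · have := hrec N f g (trunc_eq_trunc_of_coeff_eq ih)
      rw [hfg, sub_right_inj] at this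
      exact mul_left_cancel₀ (hc N) this

theorem order_toNat_lt (hT : IsTriangular n T) {f : K⟦X⟧} (hf : T f = T 0) (hf0 : f ≠ 0) :
    f.order.toNat < n := by
  by_contra! hn
  exact hf0 <| hT.eq_of_coeff_eq hf fun i hi => by
    rw [coeff_of_lt_order_toNat i (by omega), map_zero]

theorem exists_solution (hT : IsTriangular n T) (init : ℕ → K) :
    ∃ f, T f = 0 ∧ ∀ i < n, coeff i f = init i := by
  obtain ⟨c, hc, hrec⟩ := hT
  refine ⟨mk (triangularSolution n T c init), ?_, fun i hi => by
    rw [coeff_mk, triangularSolution_of_lt hi]⟩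
  ext N
  set g : K⟦X⟧ := mk fun i => if i < N + n then triangularSolution n T c init i else 0
  have hg : trunc (N + n) (mk (triangularSolution n T c init)) = trunc (N + n) g :=
    trunc_eq_trunc_of_coeff_eq fun i hi => by simp [g, hi]
  have hgN : coeff (N + n) g = 0 := by simp [g]
  have := hrec N _ _ hg
  rw [coeff_mk, triangularSolution_add, hgN, mul_zero, sub_zero, neg_mul, mul_neg, ← mul_assoc,
    mul_inv_cancel₀ (hc N), one_mul, sub_neg_eq_add, add_eq_right] at this
  rw [this, map_zero]

theorem exists_order_eq (hT : IsTriangular n T) {l : ℕ} (hl : l < n) :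
    ∃ f, T f = 0 ∧ f.order = l := by
  obtain ⟨f, hf, hinit⟩ := hT.exists_solution (Pi.single l 1)
  refine ⟨f, hf, order_eq_nat.mpr ⟨?_, fun i hi => ?_⟩⟩
  · simp [hinit l hl]
  · simp [hinit i (hi.trans hl), hi.ne]

end IsTriangular

end Triangular

section DifferentialOperator

open Finset.HasAntidiagonal
open scoped Nat

variable {K : Type*} [Field K] (n : ℕ) (p : ℕ → K⟦X⟧)

noncomputable def diffOp (u : K⟦X⟧) : K⟦X⟧ :=
  ∑ i ∈ Finset.range (n + 1), p i * (d⁄dX K)^[n - i] u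

noncomputable def adjointDiffOp (v : K⟦X⟧) : K⟦X⟧ :=
  ∑ m ∈ Finset.range (n + 1), (-1 : K⟦X⟧) ^ m * (d⁄dX K)^[m] (p (n - m) * v)

/-- The value at `0` of the bilinear concomitant of `diffOp n p` and `adjointDiffOp n p`. -/
noncomputable def concomitantAtZero (u v : K⟦X⟧) : K :=
  ∑ m ∈ Finset.Icc 1 n, ∑ k ∈ Finset.range m,
    (-1 : K) ^ k * constantCoeff ((d⁄dX K)^[m - 1 - k] u) *
      constantCoeff ((d⁄dX K)^[k] (p (n - m) * v))

@[simp]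
theorem diffOp_zero : diffOp n p 0 = 0 := by
  simp [diffOp]

@[simp]
theorem adjointDiffOp_zero : adjointDiffOp n p 0 = 0 := by
  simp [adjointDiffOp]

variable {n p}

theorem isTriangular_diffOp [CharZero K] (hp0 : p 0 = 1) : IsTriangular n (diffOp n p) := by
  refine ⟨fun N => ((N + 1).ascFactorial n : K),
    fun N => Nat.cast_ne_zero.mpr (Nat.ascFactorial_pos _ _).ne', fun N f g hfg => ?_⟩
  have hlead : ∀ f : K⟦X⟧, coeff N (p 0 * (d⁄dX K)^[n - 0] f) =
      (N + 1).ascFactorial n * coeff (N + n) f := by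
    simp [hp0, coeff_iterate_derivative]
  have hlower : ∀ i < n, coeff N (p (i + 1) * (d⁄dX K)^[n - (i + 1)] f) =
      coeff N (p (i + 1) * (d⁄dX K)^[n - (i + 1)] g) := fun i hi =>
    coeff_eq_of_trunc_eq (trunc_mul_eq_trunc_mul (trunc_iterate_derivative_eq
      (trunc_eq_trunc_of_le hfg (by omega))) _) N.lt_succ_self
  simp only [diffOp, Finset.sum_range_succ', map_add, map_sum, hlead, add_sub_cancel_right]
  exact Finset.sum_congr rfl fun i hi => hlower i (Finset.mem_range.mp hi)

theorem isTriangular_adjointDiffOp [CharZero K] (hp0 : p 0 = 1) :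
    IsTriangular n (adjointDiffOp n p) := by
  refine ⟨fun N => (-1) ^ n * ((N + 1).ascFactorial n : K),
    fun N => mul_ne_zero (pow_ne_zero _ (neg_ne_zero.mpr one_ne_zero))
      (Nat.cast_ne_zero.mpr (Nat.ascFactorial_pos _ _).ne'), fun N f g hfg => ?_⟩
  have hlead : ∀ f : K⟦X⟧, coeff N ((-1) ^ n * (d⁄dX K)^[n] (p (n - n) * f)) =
      (-1) ^ n * (N + 1).ascFactorial n * coeff (N + n) f := by
    intro f
    rw [show (-1 : K⟦X⟧) ^ n = C ((-1 : K) ^ n) by simp, coeff_C_mul, Nat.sub_self, hp0,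
      one_mul, coeff_iterate_derivative, mul_assoc]
  have hlower : ∀ m < n, coeff N ((-1) ^ m * (d⁄dX K)^[m] (p (n - m) * f)) =
      coeff N ((-1) ^ m * (d⁄dX K)^[m] (p (n - m) * g)) := fun m hm =>
    coeff_eq_of_trunc_eq (trunc_mul_eq_trunc_mul (trunc_iterate_derivative_eq
      (trunc_mul_eq_trunc_mul (trunc_eq_trunc_of_le hfg (by omega)) _)) _) N.lt_succ_self
  simp only [adjointDiffOp, Finset.sum_range_succ, map_add, map_sum, hlead, add_sub_cancel_right]
  exact Finset.sum_congr rfl fun m hm => hlower m (Finset.mem_range.mp hm)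

theorem concomitantAtZero_eq {u v : K⟦X⟧} {j l : ℕ} (hjl : j + l + 1 = n)
    (hu : ∀ i < j, coeff i u = 0) (hv : ∀ i < l, coeff i v = 0) :
    concomitantAtZero n p u v =
      (-1) ^ l * j ! * l ! * constantCoeff (p 0) * coeff j u * coeff l v := by
  have hterm : ∀ m ≤ n, ∀ k < m, ¬(m = n ∧ k = l) →
      coeff (m - 1 - k) u * ∑ ab ∈ antidiagonal k, coeff ab.1 (p (n - m)) * coeff ab.2 v
        = 0 := by
    intro m hm k hk hmk
    by_cases hkj : m - 1 - k < j
    · rw [hu _ hkj, zero_mul]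
    · refine mul_eq_zero_of_right _ (Finset.sum_eq_zero fun ab hab => ?_)
      rw [mem_antidiagonal] at hab
      rw [hv ab.2 (by omega), mul_zero]
  simp only [concomitantAtZero, constantCoeff_iterate_derivative, coeff_mul]
  rw [Finset.sum_eq_single_of_mem n (Finset.mem_Icc.mpr ⟨by omega, le_rfl⟩) fun m hm hmn =>
      Finset.sum_eq_zero fun k hk => by
        linear_combination ((-1) ^ k * ((m - 1 - k) ! : K) * k !) *
          hterm m (Finset.mem_Icc.mp hm).2 k (Finset.mem_range.mp hk) fun h => hmn h.1,
    Finset.sum_eq_single_of_mem l (Finset.mem_range.mpr (by omega)) fun k hk hkl => by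
      linear_combination ((-1) ^ k * ((n - 1 - k) ! : K) * k !) *
        hterm n le_rfl k (Finset.mem_range.mp hk) fun h => hkl h.2,
    Finset.sum_eq_single_of_mem (0, l) (by simp) fun ab hab hab0 => by
      rw [mem_antidiagonal] at hab
      have : ab.1 ≠ 0 := fun h => hab0 (Prod.ext h (by omega))
      rw [hv ab.2 (by omega), mul_zero],
    show n - 1 - l = j by omega, Nat.sub_self, coeff_zero_eq_constantCoeff]
  ring

theorem concomitantAtZero_ne_zero [CharZero K] (hp0 : p 0 = 1) {u v : K⟦X⟧} {j l : ℕ}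
    (hu : u.order = j) (hv : v.order = l) (hjl : j + l + 1 = n) :
    concomitantAtZero n p u v ≠ 0 := by
  obtain ⟨huj, hu⟩ := order_eq_nat.mp hu
  obtain ⟨hvl, hv⟩ := order_eq_nat.mp hv
  rw [concomitantAtZero_eq hjl hu hv, hp0, map_one, mul_one]
  simp [huj, hvl, Nat.factorial_ne_zero]

end DifferentialOperator

end PowerSeries

open PowerSeries in
theorem bilinear_concomitant_nondegenerate_general
    (n : ℕ) (p : ℕ → ℂ⟦X⟧) (hp0 : p 0 = 1)
    (L Lstar : ℂ⟦X⟧ → ℂ⟦X⟧) (β : ℂ⟦X⟧ → ℂ⟦X⟧ → ℂ)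
    (hL : ∀ u, L u = ∑ i ∈ Finset.range (n + 1),
      p i * (⇑(PowerSeries.derivative ℂ))^[n - i] u)
    (hLstar : ∀ v, Lstar v = ∑ m ∈ Finset.range (n + 1),
      (-1 : ℂ⟦X⟧) ^ m * (⇑(PowerSeries.derivative ℂ))^[m] (p (n - m) * v))
    (hβ : ∀ u v, β u v = ∑ m ∈ Finset.Icc 1 n, ∑ k ∈ Finset.range m,
      (-1 : ℂ) ^ k *
        PowerSeries.constantCoeff (R := ℂ) ((⇑(PowerSeries.derivative ℂ))^[m - 1 - k] u) *
        PowerSeries.constantCoeff (R := ℂ) ((⇑(PowerSeries.derivative ℂ))^[k] (p (n - m) * v))) :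
    (∀ u, L u = 0 → (∀ v, Lstar v = 0 → β u v = 0) → u = 0) ∧
    (∀ v, Lstar v = 0 → (∀ u, L u = 0 → β u v = 0) → v = 0) := by
  obtain rfl : L = diffOp n p := funext hL
  obtain rfl : Lstar = adjointDiffOp n p := funext hLstar
  obtain rfl : β = concomitantAtZero n p := funext₂ hβ
  have hT := isTriangular_diffOp (n := n) hp0
  have hT' := isTriangular_adjointDiffOp (n := n) hp0
  constructor
  · intro u hu hβu
    by_contra hu0
    have hj := hT.order_toNat_lt (hu.trans (diffOp_zero n p).symm) hu0
    obtain ⟨v, hv, hvl⟩ := hT'.exists_order_eq (l := n - 1 - u.order.toNat) (by omega)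
    exact concomitantAtZero_ne_zero hp0 (coe_toNat_order hu0).symm hvl (by omega) (hβu v hv)
  · intro v hv hβv
    by_contra hv0
    have hl := hT'.order_toNat_lt (hv.trans (adjointDiffOp_zero n p).symm) hv0
    obtain ⟨u, hu, huj⟩ := hT.exists_order_eq (l := n - 1 - v.order.toNat) (by omega)
    exact concomitantAtZero_ne_zero hp0 huj (coe_toNat_order hv0).symm (by omega) (hβv u hu)

open PowerSeries in
/-- the bilinear concomitant evaluated at `0` gives a non-degenerate
pairing between the solution space of `L` and that of its adjoint `L*`. -/
theorem bilinear_concomitant_nondegenerate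
    (n : ℕ) (hn : 1 ≤ n) (p : ℕ → ℂ⟦X⟧) (hp0 : p 0 = 1)
    (L Lstar : ℂ⟦X⟧ → ℂ⟦X⟧) (β : ℂ⟦X⟧ → ℂ⟦X⟧ → ℂ)
    (hL : ∀ u, L u = ∑ i ∈ Finset.range (n + 1),
      p i * (⇑(PowerSeries.derivative ℂ))^[n - i] u)
    (hLstar : ∀ v, Lstar v = ∑ m ∈ Finset.range (n + 1),
      (-1 : ℂ⟦X⟧) ^ m * (⇑(PowerSeries.derivative ℂ))^[m] (p (n - m) * v))
    (hβ : ∀ u v, β u v = ∑ m ∈ Finset.Icc 1 n, ∑ k ∈ Finset.range m,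
      (-1 : ℂ) ^ k *
        PowerSeries.constantCoeff (R := ℂ) ((⇑(PowerSeries.derivative ℂ))^[m - 1 - k] u) *
        PowerSeries.constantCoeff (R := ℂ) ((⇑(PowerSeries.derivative ℂ))^[k] (p (n - m) * v))) :
    (∀ u, L u = 0 → (∀ v, Lstar v = 0 → β u v = 0) → u = 0) ∧
    (∀ v, Lstar v = 0 → (∀ u, L u = 0 → β u v = 0) → v = 0) :=
  bilinear_concomitant_nondegenerate_general n p hp0 L Lstar β hL hLstar hβ
end

section
/- Let n ≥ 2 and let c = (c₀,…,c_{n+1}) be a parametrised arc in ℂ^{n+2} in Monge normal form for dimension n+1: c₀ = 1, c₁ = t, c_k ≡ t^k (mod t^{n+4}) for 2 ≤ k ≤ n, and c_{n+1} ≡ t^{n+1} (mod t^{n+5}). Let d := (c₁/t, c₂/t, …, c_{n+1}/t) be the projected arc in ℂ^{n+1} (each c_k for k ≥ 1 has zero constant term, so c_k/t ∈ ℂ[[t]]). Then d admits a normalization c′ = (c′₀,…,c′_n) in Monge normal form for dimension n: c′₀ = 1, c′₁ = t, c′_k ≡ t^k (mod t^{n+3}) for 2 ≤ k ≤ n−1,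 and c′_n ≡ t^n (mod t^{n+4}). (Projection from the center of an arc of the Monge hypersurface lands in the Monge hypersurface of the lower-dimensional projective space.) -/
open PowerSeries

/-! Removing the centre lowers every index and every order of contact by one:
`d₀ = 1`, `d_k ≡ t^k (mod t^{n+3})` and `d_n ≡ t^n (mod t^{n+4})`. Only `d₁ ≡ t` is not yet exact;
reparametrising by its compositional inverse `φ` turns it into `t`, and since `φ ≡ t (mod t^{n+3})`
gives `φ^k ≡ t^k (mod t^{n+2+k})`, the other congruences survive the reparametrisation
(for `d_n` this needs `n ≥ 2`). -/

theorem coeff_pscomp (φ g : ℂ⟦X⟧) (m : ℕ) :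
    coeff m (pscomp φ g) = ∑ k ∈ Finset.range (m + 1), coeff k g * coeff m (φ ^ k) := by
  simp [pscomp, map_sum]

theorem modEq_iff_X_pow_dvd {f g : ℂ⟦X⟧} {m : ℕ} : ModEq f g m ↔ X ^ m ∣ f - g :=
  X_pow_dvd_iff.symm

namespace ModEq

variable {f g h : ℂ⟦X⟧} {m : ℕ}

theorem coeff_eq (hfg : ModEq f g m) {j : ℕ} (hj : j < m) : coeff j f = coeff j g := by
  simpa [sub_eq_zero] using hfg j hj

theorem of_coeff_eq (hfg : ∀ j < m, coeff j f = coeff j g) : ModEq f g m := fun j hj => by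
  simp [hfg j hj]

theorem symm (hfg : ModEq f g m) : ModEq g f m :=
  of_coeff_eq fun _ hj => (hfg.coeff_eq hj).symm

theorem trans (hfg : ModEq f g m) (hgh : ModEq g h m) : ModEq f h m :=
  of_coeff_eq fun _ hj => (hfg.coeff_eq hj).trans (hgh.coeff_eq hj)

theorem pow (hf : constantCoeff f = 0) (hg : constantCoeff g = 0) (hfg : ModEq f g m)
    {k N : ℕ} (hN : N + 1 ≤ m + k) : ModEq (f ^ k) (g ^ k) N := by
  rcases k with _ | k
  · exact of_coeff_eq fun _ _ => rfl
  rw [modEq_iff_X_pow_dvd] at hfg ⊢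
  -- `f^(k+1) - g^(k+1) = (f - g) · ∑ fⁱ g^(k-i)`, and every summand is divisible by `t^k`.
  have hsum : X ^ k ∣ ∑ i ∈ Finset.range (k + 1), f ^ i * g ^ (k + 1 - 1 - i) := by
    refine Finset.dvd_sum fun i hi => ?_
    rw [← pow_mul_pow_sub X (Finset.mem_range_succ_iff.mp hi), Nat.add_sub_cancel]
    exact mul_dvd_mul (pow_dvd_pow_of_dvd (X_dvd_iff.mpr hf) i)
      (pow_dvd_pow_of_dvd (X_dvd_iff.mpr hg) (k - i))
  rw [← geom_sum₂_mul]
  refine (pow_dvd_pow X (by omega : N ≤ k + m)).trans ?_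
  rw [pow_add]
  exact mul_dvd_mul hsum hfg

theorem pscomp (φ : ℂ⟦X⟧) (hfg : ModEq f g m) :
    ModEq (_root_.pscomp φ f) (_root_.pscomp φ g) m :=
  of_coeff_eq fun j hj => by
    simp only [coeff_pscomp]
    refine Finset.sum_congr rfl fun k hk => ?_
    rw [hfg.coeff_eq (by rw [Finset.mem_range] at hk; omega)]

end ModEq

theorem pscomp_X_pow {φ : ℂ⟦X⟧} (hφ : constantCoeff φ = 0) (k : ℕ) : pscomp φ (X ^ k) = φ ^ k := by
  ext m
  rw [coeff_pscomp]
  simp only [coeff_X_pow, ite_mul, one_mul, zero_mul, Finset.sum_ite_eq', Finset.mem_range]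
  split_ifs with hk
  · rfl
  · exact (X_pow_dvd_iff.mp (pow_dvd_pow_of_dvd (X_dvd_iff.mpr hφ) k) m (by omega)).symm

theorem pscomp_modEq_X_pow {φ a : ℂ⟦X⟧} {M N k : ℕ} (hφ0 : constantCoeff φ = 0)
    (hφ : ModEq φ X M) (ha : ModEq a (X ^ k) N) (hN : N + 1 ≤ M + k) :
    ModEq (pscomp φ a) (X ^ k) N :=
  (ha.pscomp φ).trans <| by
    rw [pscomp_X_pow hφ0]
    exact hφ.pow hφ0 constantCoeff_X hN

theorem isNormalization_pscomp {N : ℕ} (a : Fin N → ℂ⟦X⟧) {φ : ℂ⟦X⟧}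
    (hφ0 : constantCoeff φ = 0) (hφ1 : coeff 1 φ ≠ 0) :
    IsNormalization a fun i => pscomp φ (a i) :=
  ⟨1, 1, φ, by simp, isUnit_one, hφ0, hφ1, fun i => by simp [Matrix.one_apply, ite_smul]⟩

/-- Solves `∑ fₗ φˡ = t` for `φ` degree by degree: when `f₀ = 0` and `f₁ = 1`, the coefficient of
`t^(m+2)` in `φ^(l+2)` only involves coefficients of `φ` below `m + 2`. -/
noncomputable def compInvCoeff (f : ℂ⟦X⟧) : ℕ → ℂ
  | 0 => 0
  | 1 => 1
  | m + 2 => -∑ l ∈ Finset.range (m + 1), coeff (l + 2) f *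
      coeff (m + 2) ((mk fun i => if _ : i < m + 2 then compInvCoeff f i else 0) ^ (l + 2))

noncomputable def compInv (f : ℂ⟦X⟧) : ℂ⟦X⟧ := mk (compInvCoeff f)

theorem constantCoeff_compInv (f : ℂ⟦X⟧) : constantCoeff (compInv f) = 0 := by
  rw [← coeff_zero_eq_constantCoeff_apply, compInv, coeff_mk, compInvCoeff]

theorem coeff_one_compInv (f : ℂ⟦X⟧) : coeff 1 (compInv f) = 1 := by
  rw [compInv, coeff_mk, compInvCoeff]

theorem pscomp_compInv {f : ℂ⟦X⟧} (h0 : coeff 0 f = 0) (h1 : coeff 1 f = 1) :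
    pscomp (compInv f) f = X := by
  ext m
  rw [coeff_pscomp, coeff_X]
  match m with
  | 0 => simp [h0]
  | 1 => simp [Finset.sum_range_succ, h0, h1, coeff_one_compInv]
  | p + 2 =>
    set ψ : ℂ⟦X⟧ := mk fun i => if _ : i < p + 2 then compInvCoeff f i else 0
    have hψ0 : constantCoeff ψ = 0 := by
      rw [← coeff_zero_eq_constantCoeff_apply, coeff_mk, dif_pos (by omega), compInvCoeff]
    have hφψ : ModEq (compInv f) ψ (p + 2) :=
      ModEq.of_coeff_eq fun j hj => by rw [compInv, coeff_mk, coeff_mk, dif_pos hj]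
    have hpow (l : ℕ) : coeff (p + 2) (compInv f ^ (l + 1 + 1)) = coeff (p + 2) (ψ ^ (l + 2)) :=
      (hφψ.pow (constantCoeff_compInv f) hψ0 (N := p + 3) (by omega)).coeff_eq (by omega)
    rw [Finset.sum_range_succ', Finset.sum_range_succ', h0, h1, zero_mul, add_zero, one_mul, zero_add, pow_one, if_neg (by omega),
      show coeff (p + 2) (compInv f) = compInvCoeff f (p + 2) from coeff_mk _ _, compInvCoeff]
    simp only [hpow]
    exact add_neg_cancel _

theorem compInv_modEq_X {f : ℂ⟦X⟧} {M : ℕ} (h0 : coeff 0 f = 0) (h1 : coeff 1 f = 1)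
    (hf : ModEq f X M) : ModEq (compInv f) X M := by
  have := hf.pscomp (compInv f)
  rw [pscomp_compInv h0 h1, ← pow_one X, pscomp_X_pow (constantCoeff_compInv f), pow_one,
    pow_one] at this
  exact this.symm

theorem modEq_X_pow_of_coeff_succ {a b : ℂ⟦X⟧} (hab : ∀ j, coeff j a = coeff (j + 1) b)
    {k M : ℕ} (hb : ModEq b (X ^ (k + 1)) (M + 1)) : ModEq a (X ^ k) M :=
  ModEq.of_coeff_eq fun j hj => by
    rw [hab, hb.coeff_eq (by omega), pow_succ', coeff_succ_X_mul]

open PowerSeries in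
/-- projecting an arc in Monge normal form (dimension `n+1`) from its
center yields an arc admitting a normalization in Monge normal form (dimension `n`). -/
theorem projection_of_monge_normal_form
    (n : ℕ) (hn : 2 ≤ n) (c : Fin (n + 2) → ℂ⟦X⟧)
    (h1 : c ⟨1, by omega⟩ = PowerSeries.X)
    (hmid : ∀ (k : ℕ) (hk2 : 2 ≤ k) (hk : k ≤ n),
      ModEq (c ⟨k, by omega⟩) (PowerSeries.X ^ k) (n + 4))
    (hlast : ModEq (c ⟨n + 1, by omega⟩) (PowerSeries.X ^ (n + 1)) (n + 5))
    (d : Fin (n + 1) → ℂ⟦X⟧)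
    (hd : ∀ (k : Fin (n + 1)) (j : ℕ),
      PowerSeries.coeff (R := ℂ) j (d k) = PowerSeries.coeff (R := ℂ) (j + 1) (c k.succ)) :
    ∃ c' : Fin (n + 1) → ℂ⟦X⟧, IsNormalization d c' ∧
      c' ⟨0, by omega⟩ = 1 ∧ c' ⟨1, by omega⟩ = PowerSeries.X ∧
      (∀ (k : ℕ) (hk2 : 2 ≤ k) (hk : k ≤ n - 1),
        ModEq (c' ⟨k, by omega⟩) (PowerSeries.X ^ k) (n + 3)) ∧
      ModEq (c' ⟨n, by omega⟩) (PowerSeries.X ^ n) (n + 4) := by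
  have hd0 : d ⟨0, by omega⟩ = 1 := by
    ext j
    rw [hd, Fin.succ_mk, h1, ← mul_one X, coeff_succ_X_mul]
  have hdk (k : ℕ) (hk1 : 1 ≤ k) (hk : k ≤ n - 1) : ModEq (d ⟨k, by omega⟩) (X ^ k) (n + 3) :=
    modEq_X_pow_of_coeff_succ (hd _) (hmid (k + 1) (by omega) (by omega))
  have hdn : ModEq (d ⟨n, by omega⟩) (X ^ n) (n + 4) := modEq_X_pow_of_coeff_succ (hd _) hlast
  set f := d ⟨1, by omega⟩
  have hf : ModEq f X (n + 3) := pow_one (X : ℂ⟦X⟧) ▸ hdk 1 le_rfl (by omega)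
  have hf0 : coeff 0 f = 0 := by simpa using hf.coeff_eq (j := 0) (by omega)
  have hf1 : coeff 1 f = 1 := by simpa using hf.coeff_eq (j := 1) (by omega)
  have hφ0 := constantCoeff_compInv f
  have hφ := compInv_modEq_X hf0 hf1 hf
  refine ⟨fun i => pscomp (compInv f) (d i),
    isNormalization_pscomp d hφ0 (by simp [coeff_one_compInv]), ?_, pscomp_compInv hf0 hf1,
    fun k hk2 hk => pscomp_modEq_X_pow hφ0 hφ (hdk k (by omega) hk) (by omega),
    pscomp_modEq_X_pow hφ0 hφ hdn (by omega)⟩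
  dsimp only
  rw [hd0, ← pow_zero X, pscomp_X_pow hφ0, pow_zero, pow_zero]
end
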